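/- Let p be an odd prime and α ∈ p^{-1}S with tr(α) ∈ Z and det(α) ∈ p^{-1}Z. Then the number of cosets γ ∈ Γ_0(p)\SL_2(Z) such that α ∈ γ^{-1} S(1/p) γ equals 1 if α ∉ S, and equals p+1 if α ∈ S. -/

import Mathlib

open scoped Classical

/-- The lattice `R(C/B) ⊆ M₂(ℚ)`. -/
def Rlat (C B : ℕ) : Set (Matrix (Fin 2) (Fin 2) ℚ) :=
  {x | (∃ n : ℤ, x 0 0 = n) ∧ (∃ n : ℤ, x 1 1 = n) ∧
       (∃ n : ℤ, x 0 1 = (n : ℚ) / B) ∧ (∃ n : ℤ, x 1 0 = (C : ℚ) * n)}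

/-- `S = ℤ + 2 M₂(ℤ)`, viewed inside `M₂(ℚ)`. -/
def Sset : Set (Matrix (Fin 2) (Fin 2) ℚ) :=
  {α | ∃ (m : ℤ) (γ : Matrix (Fin 2) (Fin 2) ℤ),
    α = (m : ℚ) • (1 : Matrix (Fin 2) (Fin 2) ℚ) + (2 : ℚ) • γ.map (Int.cast : ℤ → ℚ)}

/-- `S(1/p) = ℤ + 2 R(1/p) ⊆ M₂(ℚ)`. -/
def SOneOverP (p : ℕ) : Set (Matrix (Fin 2) (Fin 2) ℚ) :=
  {α | ∃ (m : ℤ) (β : Matrix (Fin 2) (Fin 2) ℚ), β ∈ Rlat 1 p ∧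
    α = (m : ℚ) • (1 : Matrix (Fin 2) (Fin 2) ℚ) + (2 : ℚ) • β}

/-!
Write `α = p⁻¹ t` with `t = m + 2g ∈ S`. Conjugation by `γ ∈ SL₂(ℤ)` keeps this shape, and since
dividing by the odd number `p` does not change parities, `p⁻¹ t` lies in `S` iff `p` divides every
entry of `t`, and in `S(1/p)` iff `p` divides `t₀₀, t₁₀, t₁₁`. As `p ∣ tr t`, the condition for
`γ t γ⁻¹` says that the bottom row `(c, d)` of `γ` lies in the left kernel of `T = t mod p`.
The cosets `Γ₀(p)γ` are in bijection with the points `(c : d)` of `ℙ¹(𝔽_p)`, and since `det T = 0`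
the kernel is all of `𝔽_p²` (giving `p + 1` points) when `T = 0`, i.e. `α ∈ S`, and a line
(giving one point) otherwise.
-/

open Matrix CongruenceSubgroup
open scoped MatrixGroups LinearAlgebra.Projectivization

local notation "SLMOD(" N ")" => SpecialLinearGroup.map (Int.castRingHom (ZMod N))

section Membership

variable {p : ℕ}

lemma smul_one_add_two_smul_apply {n : Type*} [DecidableEq n] (m : ℤ) (g : Matrix n n ℤ)
    (i j : n) : (m • 1 + 2 • g : Matrix n n ℤ) i j = (if i = j then m else 0) + 2 * g i j := by
  rw [Matrix.add_apply, Matrix.smul_apply, Matrix.smul_apply, one_apply]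
  simp

lemma map_smul_one_add_two_smul {n : Type*} [DecidableEq n] (m : ℤ) (g : Matrix n n ℤ) :
    (m • 1 + 2 • g : Matrix n n ℤ).map (Int.cast : ℤ → ℚ) =
      (m : ℚ) • 1 + (2 : ℚ) • g.map Int.cast := by
  ext i j
  rw [map_apply, smul_one_add_two_smul_apply, Matrix.add_apply, Matrix.smul_apply,
    Matrix.smul_apply, one_apply]
  split_ifs <;> simp

lemma exists_inv_mul_eq_add_two_mul (hp : Odd p) {c x : ℤ} (h : (p : ℤ) ∣ c + 2 * x) :
    ∃ n : ℤ, (p : ℚ)⁻¹ * ((c + 2 * x : ℤ) : ℚ) = c + 2 * n := by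
  obtain ⟨a, ha⟩ := h
  obtain ⟨k, rfl⟩ := hp
  have hp0 : ((2 * k + 1 : ℕ) : ℚ) ≠ 0 := by positivity
  have hodd : a = c + 2 * (x - k * a) := by push_cast at ha; linear_combination -ha
  refine ⟨x - k * a, ?_⟩
  rw [ha, Int.cast_mul, Int.cast_natCast, inv_mul_cancel_left₀ hp0]
  exact_mod_cast hodd

lemma intCast_dvd_of_inv_mul_eq (hp : p ≠ 0) {a b : ℤ} (h : (p : ℚ)⁻¹ * a = b) :
    (p : ℤ) ∣ a := by
  refine ⟨b, ?_⟩
  rw [inv_mul_eq_iff_eq_mul₀ (by exact_mod_cast hp)] at h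
  exact_mod_cast h

lemma inv_smul_map_apply (t : Matrix (Fin 2) (Fin 2) ℤ) (i j : Fin 2) :
    ((p : ℚ)⁻¹ • t.map (Int.cast : ℤ → ℚ)) i j = (p : ℚ)⁻¹ * (t i j : ℚ) := rfl

lemma inv_smul_map_mem_Sset_iff (hp : Odd p) (m : ℤ) (g : Matrix (Fin 2) (Fin 2) ℤ) :
    (p : ℚ)⁻¹ • (m • 1 + 2 • g : Matrix (Fin 2) (Fin 2) ℤ).map (Int.cast : ℤ → ℚ) ∈ Sset ↔
      ∀ i j, (p : ℤ) ∣ (m • 1 + 2 • g : Matrix (Fin 2) (Fin 2) ℤ) i j := by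
  constructor
  · rintro ⟨m', δ, h⟩ i j
    apply intCast_dvd_of_inv_mul_eq (b := (if i = j then m' else 0) + 2 * δ i j) hp.pos.ne'
    simpa [one_apply, apply_ite] using congrFun (congrFun h i) j
  · intro h
    simp only [smul_one_add_two_smul_apply] at h
    choose n hn using fun i j ↦ exists_inv_mul_eq_add_two_mul hp (h i j)
    refine ⟨m, of n, ?_⟩
    ext i j
    rw [inv_smul_map_apply, smul_one_add_two_smul_apply, hn]
    simp [one_apply, apply_ite]

lemma inv_smul_map_mem_SOneOverP_iff (hp : Odd p) (m : ℤ) (g : Matrix (Fin 2) (Fin 2) ℤ) :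
    (p : ℚ)⁻¹ • (m • 1 + 2 • g : Matrix (Fin 2) (Fin 2) ℤ).map (Int.cast : ℤ → ℚ) ∈
        SOneOverP p ↔
      (p : ℤ) ∣ (m • 1 + 2 • g : Matrix (Fin 2) (Fin 2) ℤ) 0 0 ∧
      (p : ℤ) ∣ (m • 1 + 2 • g : Matrix (Fin 2) (Fin 2) ℤ) 1 0 ∧
      (p : ℤ) ∣ (m • 1 + 2 • g : Matrix (Fin 2) (Fin 2) ℤ) 1 1 := by
  have hp0 : p ≠ 0 := hp.pos.ne'
  constructor
  · rintro ⟨m', β, ⟨⟨a, ha⟩, ⟨d, hd⟩, -, ⟨c, hc⟩⟩, h⟩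
    have entry := fun i j ↦ congrFun (congrFun h i) j
    refine ⟨intCast_dvd_of_inv_mul_eq hp0 (b := m' + 2 * a) ?_,
      intCast_dvd_of_inv_mul_eq hp0 (b := 2 * c) ?_,
      intCast_dvd_of_inv_mul_eq hp0 (b := m' + 2 * d) ?_⟩
    · simpa [ha] using entry 0 0
    · simpa [hc] using entry 1 0
    · simpa [hd] using entry 1 1
  · simp only [smul_one_add_two_smul_apply]
    rintro ⟨h00, h10, h11⟩
    obtain ⟨a, ha⟩ := exists_inv_mul_eq_add_two_mul hp h00
    obtain ⟨c, hc⟩ := exists_inv_mul_eq_add_two_mul hp h10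
    obtain ⟨d, hd⟩ := exists_inv_mul_eq_add_two_mul hp h11
    refine ⟨m, !![(a : ℚ), g 0 1 / p; c, d],
      ⟨⟨a, rfl⟩, ⟨d, rfl⟩, ⟨g 0 1, rfl⟩, ⟨c, by simp⟩⟩, ?_⟩
    ext i j
    rw [inv_smul_map_apply, smul_one_add_two_smul_apply]
    fin_cases i <;> fin_cases j
    · simpa using ha
    · simp [div_eq_inv_mul, mul_left_comm]
    · simpa using hc
    · simpa using hd

lemma map_intCast_zmod_eq_zero_iff {n : Type*} (t : Matrix n n ℤ) :
    t.map (Int.cast : ℤ → ZMod p) = 0 ↔ ∀ i j, (p : ℤ) ∣ t i j := by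
  simp [← Matrix.ext_iff, ZMod.intCast_zmod_eq_zero_iff_dvd]

lemma trace_map_zmod_eq_zero (hp : p ≠ 0) {t : Matrix (Fin 2) (Fin 2) ℤ}
    (h : ∃ n : ℤ, ((p : ℚ)⁻¹ • t.map (Int.cast : ℤ → ℚ)).trace = n) :
    (t.map (Int.cast : ℤ → ZMod p)).trace = 0 := by
  obtain ⟨n, hn⟩ := h
  rw [trace_smul, trace_fin_two, map_apply, map_apply, smul_eq_mul, ← Int.cast_add] at hn
  rw [trace_fin_two, map_apply, map_apply, ← Int.cast_add, ZMod.intCast_zmod_eq_zero_iff_dvd]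
  exact intCast_dvd_of_inv_mul_eq hp hn

lemma det_map_zmod_eq_zero (hp : p ≠ 0) {t : Matrix (Fin 2) (Fin 2) ℤ}
    (h : ∃ n : ℤ, ((p : ℚ)⁻¹ • t.map (Int.cast : ℤ → ℚ)).det = n / p) :
    (t.map (Int.cast : ℤ → ZMod p)).det = 0 := by
  obtain ⟨n, hn⟩ := h
  rw [det_smul, Fintype.card_fin, det_fin_two, map_apply, map_apply, map_apply, map_apply,
    ← Int.cast_mul, ← Int.cast_mul, ← Int.cast_sub] at hn
  rw [det_fin_two, map_apply, map_apply, map_apply, map_apply, ← Int.cast_mul, ← Int.cast_mul,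
    ← Int.cast_sub, ZMod.intCast_zmod_eq_zero_iff_dvd]
  refine intCast_dvd_of_inv_mul_eq hp (b := n) ?_
  have hp0 : (p : ℚ) ≠ 0 := by exact_mod_cast hp
  field_simp at hn ⊢
  linear_combination hn

end Membership

lemma Matrix.SpecialLinearGroup.conj_row_eq_zero_iff {n R : Type*} [Fintype n] [DecidableEq n]
    [CommRing R] (g : SpecialLinearGroup n R) (A : Matrix n n R) (i : n) :
    ((g : Matrix n n R) * A * ((g⁻¹ : SpecialLinearGroup n R) : Matrix n n R)) i = 0 ↔
      (g : Matrix n n R) i ᵥ* A = 0 := by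
  rw [mul_apply_eq_vecMul, mul_apply_eq_vecMul]
  refine ⟨fun h ↦ ?_, fun h ↦ by rw [h, zero_vecMul]⟩
  rw [← vecMul_one ((g : Matrix n n R) i ᵥ* A), ← coe_one, ← inv_mul_cancel g, coe_mul,
    ← vecMul_vecMul, h, zero_vecMul]

lemma conj_smul_one_add_two_smul {n : Type*} [Fintype n] [DecidableEq n]
    (γ : SpecialLinearGroup n ℤ) (m : ℤ) (g : Matrix n n ℤ) :
    (γ : Matrix n n ℤ) * (m • 1 + 2 • g) * ((γ⁻¹ : SpecialLinearGroup n ℤ) : Matrix n n ℤ) =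
      m • 1 + 2 • ((γ : Matrix n n ℤ) * g * ((γ⁻¹ : SpecialLinearGroup n ℤ) : Matrix n n ℤ)) := by
  rw [mul_add, add_mul, Matrix.mul_smul, Matrix.smul_mul, Matrix.mul_one, Matrix.mul_smul,
    Matrix.smul_mul, ← Matrix.SpecialLinearGroup.coe_mul, mul_inv_cancel,
    Matrix.SpecialLinearGroup.coe_one]

lemma conj_mem_SOneOverP_iff {p : ℕ} (hp : Odd p) (m : ℤ) (g : Matrix (Fin 2) (Fin 2) ℤ)
    (htr : ((m • 1 + 2 • g : Matrix (Fin 2) (Fin 2) ℤ).map (Int.cast : ℤ → ZMod p)).trace = 0)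
    (γ : SL(2, ℤ)) :
    (γ : Matrix (Fin 2) (Fin 2) ℤ).map (Int.cast : ℤ → ℚ) *
        ((p : ℚ)⁻¹ • (m • 1 + 2 • g : Matrix (Fin 2) (Fin 2) ℤ).map (Int.cast : ℤ → ℚ)) *
        ((γ⁻¹ : SL(2, ℤ)) : Matrix (Fin 2) (Fin 2) ℤ).map (Int.cast : ℤ → ℚ) ∈ SOneOverP p ↔
      ((SLMOD(p) γ : SL(2, ZMod p)) : Matrix (Fin 2) (Fin 2) (ZMod p)) 1 ᵥ*
        (m • 1 + 2 • g : Matrix (Fin 2) (Fin 2) ℤ).map (Int.cast : ℤ → ZMod p) = 0 := by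
  set t : Matrix (Fin 2) (Fin 2) ℤ := m • 1 + 2 • g
  set u : Matrix (Fin 2) (Fin 2) ℤ :=
    (γ : Matrix (Fin 2) (Fin 2) ℤ) * t * ((γ⁻¹ : SL(2, ℤ)) : Matrix (Fin 2) (Fin 2) ℤ) with hu
  have hconj : (γ : Matrix (Fin 2) (Fin 2) ℤ).map (Int.cast : ℤ → ℚ) *
      ((p : ℚ)⁻¹ • t.map (Int.cast : ℤ → ℚ)) *
      ((γ⁻¹ : SL(2, ℤ)) : Matrix (Fin 2) (Fin 2) ℤ).map (Int.cast : ℤ → ℚ) =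
        (p : ℚ)⁻¹ • u.map Int.cast := by
    simp [hu, ← Int.coe_castRingHom, Matrix.map_mul]
  have hu_mod : u.map (Int.cast : ℤ → ZMod p) =
      (SLMOD(p) γ : Matrix (Fin 2) (Fin 2) (ZMod p)) * t.map Int.cast *
        (((SLMOD(p) γ)⁻¹ : SL(2, ZMod p)) : Matrix (Fin 2) (Fin 2) (ZMod p)) := by
    simp only [hu, ← map_inv, ← Int.coe_castRingHom, Matrix.map_mul,
      SpecialLinearGroup.map_apply_coe, RingHom.mapMatrix_apply]
  have htr_u : (u 0 0 : ZMod p) + (u 1 1 : ZMod p) = 0 := by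
    rw [← map_apply (f := Int.cast), ← map_apply (f := Int.cast), ← trace_fin_two, hu_mod,
      trace_mul_cycle, ← Matrix.SpecialLinearGroup.coe_mul, inv_mul_cancel,
      Matrix.SpecialLinearGroup.coe_one, Matrix.one_mul, htr]
  rw [hconj, hu, conj_smul_one_add_two_smul, inv_smul_map_mem_SOneOverP_iff hp,
    ← conj_smul_one_add_two_smul, ← hu, ← SpecialLinearGroup.conj_row_eq_zero_iff, ← hu_mod]
  simp only [← ZMod.intCast_zmod_eq_zero_iff_dvd]
  constructor
  · rintro ⟨-, h10, h11⟩
    ext j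
    fin_cases j
    · exact h10
    · exact h11
  · intro h
    have h10 : (u 1 0 : ZMod p) = 0 := congrFun h 0
    have h11 : (u 1 1 : ZMod p) = 0 := congrFun h 1
    exact ⟨by linear_combination htr_u - h11, h10, h11⟩

section ProjectiveLine

variable {F : Type*} [Field F]

def projBottomRow (g : SL(2, F)) : ℙ F (Fin 2 → F) :=
  Projectivization.mk F ((g : Matrix (Fin 2) (Fin 2) F) 1) (g.row_ne_zero 1)

lemma projBottomRow_eq_iff (g g' : SL(2, F)) :
    projBottomRow g = projBottomRow g' ↔
      ((g' * g⁻¹ : SL(2, F)) : Matrix (Fin 2) (Fin 2) F) 1 0 = 0 := by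
  rw [eq_comm, projBottomRow, projBottomRow, Projectivization.mk_eq_mk_iff']
  constructor
  · rintro ⟨a, ha⟩
    have : ((g' * g⁻¹ : SL(2, F)) : Matrix (Fin 2) (Fin 2) F) 1 =
        a • (1 : Matrix (Fin 2) (Fin 2) F) 1 := by
      rw [Matrix.SpecialLinearGroup.coe_mul, mul_apply_eq_vecMul, ← ha, smul_vecMul,
        ← mul_apply_eq_vecMul, ← Matrix.SpecialLinearGroup.coe_mul, mul_inv_cancel,
        Matrix.SpecialLinearGroup.coe_one]
    simpa using congrFun this 0
  · intro h
    obtain ⟨h₀, rfl⟩ : ∃ h₀, g' = h₀ * g := ⟨g' * g⁻¹, by group⟩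
    rw [mul_inv_cancel_right] at h
    refine ⟨(h₀ : Matrix (Fin 2) (Fin 2) F) 1 1, ?_⟩
    rw [Matrix.SpecialLinearGroup.coe_mul, mul_apply_eq_vecMul]
    ext j
    simp [vecMul, dotProduct, Fin.sum_univ_two, h]

variable (p : ℕ) [Fact p.Prime]

def cosetToProjLine :
    Quotient (QuotientGroup.rightRel (Gamma0 p)) → ℙ (ZMod p) (Fin 2 → ZMod p) :=
  Quotient.lift (fun γ ↦ projBottomRow (SLMOD(p) γ)) fun γ γ' h ↦
    (projBottomRow_eq_iff _ _).2 <| by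
      rw [← map_inv, ← map_mul]
      exact Gamma0_mem.1 (QuotientGroup.rightRel_apply.1 h)

lemma cosetToProjLine_bijective : Function.Bijective (cosetToProjLine p) := by
  constructor
  · rintro ⟨γ⟩ ⟨γ'⟩ h
    refine Quotient.sound (QuotientGroup.rightRel_apply.2 (Gamma0_mem.2 ?_))
    have := (projBottomRow_eq_iff _ _).1 h
    rwa [← map_inv, ← map_mul] at this
  · intro x
    induction x using Projectivization.ind with | h v hv =>
    by_cases hv0 : v 0 = 0
    · have hv1 : v 1 ≠ 0 := fun hv1 ↦ hv (by ext j; fin_cases j <;> simp [hv0, hv1])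
      refine ⟨Quotient.mk _ 1, (Projectivization.mk_eq_mk_iff' _ _ _ _ _).2 ⟨(v 1)⁻¹, ?_⟩⟩
      ext j
      fin_cases j <;> simp [hv0, hv1]
    · obtain ⟨γ, -, hγ⟩ := ModularGroup.bottom_row_surj (R := ℤ)
        (a := ![1, ((v 1 / v 0).val : ℤ)]) isCoprime_one_left
      refine ⟨Quotient.mk _ γ, (Projectivization.mk_eq_mk_iff' _ _ _ _ _).2 ⟨(v 0)⁻¹, ?_⟩⟩
      ext j
      fin_cases j <;> simp [hγ, hv0, div_eq_inv_mul]

lemma card_cosets_bottomRow_vecMul_eq_zero (A : Matrix (Fin 2) (Fin 2) (ZMod p)) :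
    Nat.card {q : Quotient (QuotientGroup.rightRel (Gamma0 p)) //
      ∃ γ : SL(2, ℤ), Quotient.mk _ γ = q ∧
        ((SLMOD(p) γ : SL(2, ZMod p)) : Matrix (Fin 2) (Fin 2) (ZMod p)) 1 ᵥ* A = 0} =
    Nat.card (LinearMap.ker A.vecMulLinear).projectivization := by
  refine Nat.card_congr (Equiv.subtypeEquiv (Equiv.ofBijective _ (cosetToProjLine_bijective p))
    fun q ↦ ?_)
  induction q using Quotient.ind with | _ γ => ?_
  exact ⟨fun ⟨γ', hγ', hA⟩ ↦ hγ' ▸ hA, fun h ↦ ⟨γ, rfl, h⟩⟩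

end ProjectiveLine

section Counting

variable {k V : Type*} [Field k] [AddCommGroup V] [Module k V]

lemma Submodule.card_projectivization_top :
    Nat.card (⊤ : Submodule k V).projectivization = Nat.card (ℙ k V) :=
  Nat.card_congr <| Equiv.subtypeUnivEquiv fun x ↦
    (Submodule.mem_projectivization_iff_submodule_le _ x).2 le_top

lemma Submodule.card_projectivization_of_finrank_eq_one {K : Submodule k V}
    (hK : Module.finrank k K = 1) : Nat.card K.projectivization = 1 := by
  have : FiniteDimensional k K := Module.finite_of_finrank_eq_succ hK
  refine Nat.card_eq_one_iff_exists.2 ⟨⟨Projectivization.mk'' K hK,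
    (K.mem_projectivization_iff_submodule_le _).2 (Projectivization.submodule_mk'' K hK).le⟩, ?_⟩
  rintro ⟨x, hx⟩
  rw [Submodule.mem_projectivization_iff_submodule_le] at hx
  refine Subtype.ext (Projectivization.submodule_injective ?_)
  rw [Projectivization.submodule_mk'']
  exact Submodule.eq_of_le_of_finrank_eq hx (x.finrank_submodule.trans hK.symm)

lemma Matrix.finrank_ker_vecMulLinear_eq_one {A : Matrix (Fin 2) (Fin 2) k} (hA : A ≠ 0)
    (hdet : A.det = 0) : Module.finrank k (LinearMap.ker A.vecMulLinear) = 1 := by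
  have hbot : LinearMap.ker A.vecMulLinear ≠ ⊥ := by
    intro h
    have hinj : Function.Injective fun v ↦ v ᵥ* A := LinearMap.ker_eq_bot.1 h
    rw [vecMul_injective_iff_isUnit, isUnit_iff_isUnit_det, hdet] at hinj
    exact not_isUnit_zero hinj
  have htop : LinearMap.ker A.vecMulLinear ≠ ⊤ := by
    intro h
    refine hA (ext fun i j ↦ ?_)
    have : Pi.single i 1 ᵥ* A = 0 := LinearMap.mem_ker.1 (h ▸ Submodule.mem_top)
    simpa [single_vecMul] using congrFun this j
  have hlt := Submodule.finrank_lt htop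
  rw [Module.finrank_fin_fun] at hlt
  have hpos := Submodule.finrank_eq_zero.not.2 hbot
  omega

lemma Matrix.card_projectivization_ker_vecMulLinear [Finite k] {A : Matrix (Fin 2) (Fin 2) k}
    (hdet : A.det = 0) :
    Nat.card (LinearMap.ker A.vecMulLinear).projectivization =
      if A = 0 then Nat.card k + 1 else 1 := by
  split_ifs with hA
  · have hker : LinearMap.ker A.vecMulLinear = ⊤ := by
      rw [hA]
      ext v
      simp
    rw [hker, Submodule.card_projectivization_top,
      Projectivization.card_of_finrank_two _ _ (Module.finrank_fin_fun _)]
  · exact Submodule.card_projectivization_of_finrank_eq_one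
      (finrank_ker_vecMulLinear_eq_one hA hdet)

end Counting

/-- For `p` an odd prime and `α ∈ p⁻¹S` with `tr(α) ∈ ℤ` and `det(α) ∈ p⁻¹ℤ`, the number
of cosets `Γ₀(p)γ ∈ Γ₀(p)\SL₂(ℤ)` with `α ∈ γ⁻¹ S(1/p) γ` is `p+1` if `α ∈ S` and `1`
otherwise. -/
theorem coset_count (p : ℕ) [Fact p.Prime] (hp2 : p ≠ 2)
    (α : Matrix (Fin 2) (Fin 2) ℚ)
    (hα : ∃ s ∈ Sset, α = ((p : ℚ))⁻¹ • s)
    (htr : ∃ n : ℤ, α.trace = (n : ℚ))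
    (hdet : ∃ n : ℤ, α.det = (n : ℚ) / p) :
    Nat.card {q : Quotient (QuotientGroup.rightRel (CongruenceSubgroup.Gamma0 p)) //
      ∃ γ : Matrix.SpecialLinearGroup (Fin 2) ℤ,
        Quotient.mk (QuotientGroup.rightRel (CongruenceSubgroup.Gamma0 p)) γ = q ∧
        ((γ : Matrix (Fin 2) (Fin 2) ℤ).map (Int.cast : ℤ → ℚ)) * α *
          (((γ⁻¹ : Matrix.SpecialLinearGroup (Fin 2) ℤ) :
            Matrix (Fin 2) (Fin 2) ℤ).map (Int.cast : ℤ → ℚ)) ∈ SOneOverP p} =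
    if α ∈ Sset then p + 1 else 1 := by
  obtain ⟨_, ⟨m, g, rfl⟩, rfl⟩ := hα
  have hp : Odd p := (Fact.out : p.Prime).odd_of_ne_two hp2
  rw [← map_smul_one_add_two_smul] at htr hdet ⊢
  simp_rw [conj_mem_SOneOverP_iff hp m g (trace_map_zmod_eq_zero hp.pos.ne' htr)]
  rw [card_cosets_bottomRow_vecMul_eq_zero,
    card_projectivization_ker_vecMulLinear (det_map_zmod_eq_zero hp.pos.ne' hdet)]
  simp only [map_intCast_zmod_eq_zero_iff, inv_smul_map_mem_Sset_iff hp, Nat.card_zmod]
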